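/- Let p ∈ int(L), K ⊆ L a convex cone containing 0 such that C := K ∩ ℍⁿ_κ (with κ := −1/⟨p,p⟩) is a closed κ-hyperbolically convex set. Then 0 is a Lorentz projection of p into K, and the set of nonzero Lorentz projections of p into K contains exactly one element. -/

import Mathlib

noncomputable section

/-- Lorentzian inner product on ℝ^{n+1}. -/
def lip {n : ℕ} (x y : Fin (n+1) → ℝ) : ℝ :=
  (∑ i : Fin n, x i.castSucc * y i.castSucc) - x (Fin.last n) * y (Fin.last n)

/-- Lorentzian norm (of vectors with nonnegative self-product). -/
def lnorm {n : ℕ} (x : Fin (n+1) → ℝ) : ℝ := Real.sqrt (lip x x)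

/-- Euclidean dot product. -/
def edot {n : ℕ} (x y : Fin (n+1) → ℝ) : ℝ := ∑ i, x i * y i

/-- The matrix J = diag(1,…,1,−1) as a map. -/
def Jm {n : ℕ} (x : Fin (n+1) → ℝ) : Fin (n+1) → ℝ :=
  fun i => if i = Fin.last n then -(x i) else x i

/-- The κ-hyperbolic space form (hyperboloid model). -/
def Hyp {n : ℕ} (κ : ℝ) : Set (Fin (n+1) → ℝ) :=
  {p | lip p p = -1/κ ∧ 0 < p (Fin.last n)}

/-- Inverse hyperbolic cosine. -/
def arcosh (x : ℝ) : ℝ := Real.log (x + Real.sqrt (x^2 - 1))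

/-- Intrinsic distance on the κ-hyperbolic space form. -/
def dH {n : ℕ} (κ : ℝ) (p q : Fin (n+1) → ℝ) : ℝ :=
  (1 / Real.sqrt κ) * arcosh (-(κ * lip p q))

/-- Lorentzian projection onto the tangent space at p. -/
def projT {n : ℕ} (κ : ℝ) (p x : Fin (n+1) → ℝ) : Fin (n+1) → ℝ :=
  x + (κ * lip p x) • p

/-- Logarithm map of the κ-hyperbolic space form. -/
def logH {n : ℕ} (κ : ℝ) (p q : Fin (n+1) → ℝ) : Fin (n+1) → ℝ :=
  (dH κ p q / lnorm (projT κ p q)) • projT κ p q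

/-- Exponential map of the κ-hyperbolic space form. -/
def expH {n : ℕ} (κ : ℝ) (p v : Fin (n+1) → ℝ) : Fin (n+1) → ℝ :=
  Real.cosh (Real.sqrt κ * lnorm v) • p +
    (Real.sinh (Real.sqrt κ * lnorm v) / (Real.sqrt κ * lnorm v)) • v

/-- The cone spanned by a set. -/
def coneOf {n : ℕ} (C : Set (Fin (n+1) → ℝ)) : Set (Fin (n+1) → ℝ) :=
  {x | ∃ t : ℝ, 0 ≤ t ∧ ∃ p ∈ C, x = t • p}

/-- The Lorentz cone. -/
def LorentzCone {n : ℕ} : Set (Fin (n+1) → ℝ) :=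
  {x | lip x x ≤ 0 ∧ 0 ≤ x (Fin.last n)}

/-- The interior of the Lorentz cone. -/
def LorentzConeInt {n : ℕ} : Set (Fin (n+1) → ℝ) :=
  {x | lip x x < 0 ∧ 0 < x (Fin.last n)}

/-!
The zero vector is a Lorentz projection by the reverse Cauchy–Schwarz inequality `⟨x, y⟩ ≤ 0`
on `L`. For a nonzero one, maximize `⟨p, ·⟩` over `C = K ∩ ℍⁿ_κ`; the maximum is attained
because `‖y‖ ≤ -⟨p, y⟩ / (p_{n+1} - ‖(p_1, …, p_n)‖)` on `L`. If `q` is a maximizer, then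
`u = -κ⟨p, q⟩ q` satisfies `⟨p - u, u⟩ = 0`, and the first-order condition for `q` along the
normalized curves `s ↦ (q + s z) / √(-κ⟨q + s z, q + s z⟩)`, `z ∈ K`, reads `⟨p, z⟩ ≤ ⟨u, z⟩`,
which is the projection inequality. Two nonzero projections `v, w` are timelike with
`⟨v, v⟩, ⟨w, w⟩ ≤ ⟨v, w⟩`, so `w - v` is causal, and the strict reverse Cauchy–Schwarz
inequality forces `v = w`.
-/

lemma nonpos_of_forall_pos_le_mul {a b : ℝ} (h : ∀ s > 0, a ≤ s * b) : a ≤ 0 := by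
  by_contra! ha
  have hb : 0 < |b| + 1 := by positivity
  have hs := h (a / (|b| + 1)) (div_pos ha hb)
  have : a / (|b| + 1) * b < a :=
    calc a / (|b| + 1) * b ≤ a / (|b| + 1) * |b| :=
          mul_le_mul_of_nonneg_left (le_abs_self b) (div_pos ha hb).le
      _ < a / (|b| + 1) * (|b| + 1) := by gcongr; linarith
      _ = a := div_mul_cancel₀ a hb.ne'
  linarith

lemma add_mem_of_convex_of_smul_mem {E : Type*} [AddCommGroup E] [Module ℝ E] {K : Set E}
    (hconv : Convex ℝ K) (hcone : ∀ t : ℝ, 0 < t → ∀ z ∈ K, t • z ∈ K) {x y : E}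
    (hx : x ∈ K) (hy : y ∈ K) : x + y ∈ K := by
  have := hcone 2 two_pos _ (hconv hx hy (by norm_num : (0 : ℝ) ≤ 1 / 2)
    (by norm_num : (0 : ℝ) ≤ 1 / 2) (by norm_num))
  rwa [smul_add, smul_smul, smul_smul, show (2 : ℝ) * (1 / 2) = 1 by norm_num, one_smul,
    one_smul] at this

section LorentzGeometry

variable {n : ℕ} {x y : Fin (n+1) → ℝ}

lemma lip_comm (x y : Fin (n+1) → ℝ) : lip x y = lip y x := by
  simp only [lip, mul_comm]

@[simp] lemma lip_add_left (x y z : Fin (n+1) → ℝ) : lip (x + y) z = lip x z + lip y z := by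
  simp only [lip, Pi.add_apply, add_mul, Finset.sum_add_distrib]; ring

@[simp] lemma lip_add_right (x y z : Fin (n+1) → ℝ) : lip x (y + z) = lip x y + lip x z := by
  rw [lip_comm, lip_add_left, lip_comm y, lip_comm z]

@[simp] lemma lip_smul_left (s : ℝ) (x y : Fin (n+1) → ℝ) :
    lip (s • x) y = s * lip x y := by
  simp only [lip, Pi.smul_apply, smul_eq_mul, mul_sub, Finset.mul_sum, mul_assoc]

@[simp] lemma lip_smul_right (s : ℝ) (x y : Fin (n+1) → ℝ) :
    lip x (s • y) = s * lip x y := by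
  rw [lip_comm, lip_smul_left, lip_comm]

@[simp] lemma lip_sub_left (x y z : Fin (n+1) → ℝ) : lip (x - y) z = lip x z - lip y z := by
  simp only [sub_eq_add_neg, ← neg_one_smul ℝ y, lip_add_left, lip_smul_left]; ring

@[simp] lemma lip_sub_right (x y z : Fin (n+1) → ℝ) : lip x (y - z) = lip x y - lip x z := by
  rw [lip_comm, lip_sub_left, lip_comm y, lip_comm z]

@[simp] lemma lip_zero_right (x : Fin (n+1) → ℝ) : lip x 0 = 0 := by
  simp [lip]

lemma continuous_lip (x : Fin (n+1) → ℝ) : Continuous (lip x) := by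
  unfold lip; fun_prop

def spatialNorm (x : Fin (n+1) → ℝ) : ℝ := √(∑ i : Fin n, x i.castSucc ^ 2)

lemma spatialNorm_nonneg (x : Fin (n+1) → ℝ) : 0 ≤ spatialNorm x := Real.sqrt_nonneg _

lemma lip_self (x : Fin (n+1) → ℝ) : lip x x = spatialNorm x ^ 2 - x (Fin.last n) ^ 2 := by
  rw [spatialNorm, Real.sq_sqrt (Finset.sum_nonneg fun i _ => sq_nonneg _)]
  simp only [lip, sq]

lemma abs_le_spatialNorm (x : Fin (n+1) → ℝ) (i : Fin n) : |x i.castSucc| ≤ spatialNorm x :=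
  Real.abs_le_sqrt <| Finset.single_le_sum (f := fun j : Fin n => x j.castSucc ^ 2)
    (fun _ _ => sq_nonneg _) (Finset.mem_univ i)

lemma spatialNorm_le_last (hx : x ∈ LorentzCone) : spatialNorm x ≤ x (Fin.last n) :=
  (sq_le_sq₀ (spatialNorm_nonneg x) hx.2).mp (by linarith [lip_self x, hx.1])

lemma spatialNorm_lt_last (hx : x ∈ LorentzConeInt) : spatialNorm x < x (Fin.last n) :=
  (sq_lt_sq₀ (spatialNorm_nonneg x) hx.2.le).mp (by linarith [lip_self x, hx.1])

lemma lorentzConeInt_subset_lorentzCone :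
    (LorentzConeInt : Set (Fin (n+1) → ℝ)) ⊆ LorentzCone :=
  fun _ hx => ⟨hx.1.le, hx.2.le⟩

lemma norm_le_last_of_mem_lorentzCone (hx : x ∈ LorentzCone) : ‖x‖ ≤ x (Fin.last n) := by
  refine (pi_norm_le_iff_of_nonneg hx.2).mpr fun i => ?_
  induction i using Fin.lastCases with
  | last => rw [Real.norm_of_nonneg hx.2]
  | cast j => exact (abs_le_spatialNorm x j).trans (spatialNorm_le_last hx)

lemma last_pos_of_mem_lorentzCone (hx : x ∈ LorentzCone) (hx0 : x ≠ 0) : 0 < x (Fin.last n) :=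
  (norm_pos_iff.mpr hx0).trans_le (norm_le_last_of_mem_lorentzCone hx)

lemma mem_lorentzConeInt (hx : x ∈ LorentzCone) (hxx : lip x x < 0) : x ∈ LorentzConeInt :=
  ⟨hxx, last_pos_of_mem_lorentzCone hx (by rintro rfl; simp at hxx)⟩

lemma sub_spatialNorm_mul_last_le_neg_lip (x : Fin (n+1) → ℝ) (hy : y ∈ LorentzCone) :
    (x (Fin.last n) - spatialNorm x) * y (Fin.last n) ≤ -lip x y := by
  have hcs : ∑ i : Fin n, x i.castSucc * y i.castSucc ≤ spatialNorm x * spatialNorm y :=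
    Real.sum_mul_le_sqrt_mul_sqrt _ _ _
  have := mul_le_mul_of_nonneg_left (spatialNorm_le_last hy) (spatialNorm_nonneg x)
  simp only [lip]
  linarith

lemma lip_nonpos_of_mem_lorentzCone (hx : x ∈ LorentzCone) (hy : y ∈ LorentzCone) :
    lip x y ≤ 0 := by
  nlinarith [sub_spatialNorm_mul_last_le_neg_lip x hy, spatialNorm_le_last hx, hy.2]

lemma lip_neg_of_mem_lorentzConeInt (hx : x ∈ LorentzConeInt) (hy : y ∈ LorentzCone)
    (hy0 : y ≠ 0) : lip x y < 0 := by
  nlinarith [sub_spatialNorm_mul_last_le_neg_lip x hy, spatialNorm_lt_last hx,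
    last_pos_of_mem_lorentzCone hy hy0]

lemma norm_le_neg_lip_div (hx : x ∈ LorentzConeInt) (hy : y ∈ LorentzCone) :
    ‖y‖ ≤ -lip x y / (x (Fin.last n) - spatialNorm x) := by
  rw [le_div_iff₀ (sub_pos.mpr (spatialNorm_lt_last hx))]
  nlinarith [sub_spatialNorm_mul_last_le_neg_lip x hy, norm_le_last_of_mem_lorentzCone hy,
    spatialNorm_lt_last hx]

lemma exists_isMaxOn_lip (hx : x ∈ LorentzConeInt) {C : Set (Fin (n+1) → ℝ)} (hC : IsClosed C)
    (hCL : C ⊆ LorentzCone) (hne : C.Nonempty) : ∃ q ∈ C, IsMaxOn (lip x) C q := by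
  obtain ⟨w, hw⟩ := hne
  refine (continuous_lip x).continuousOn.exists_isMaxOn' hC hw <|
    (Filter.hasBasis_cocompact.inf_principal C).eventually_iff.mpr
      ⟨Metric.closedBall 0 (-lip x w / (x (Fin.last n) - spatialNorm x)),
        isCompact_closedBall _ _, fun y ⟨hyb, hyC⟩ => ?_⟩
  rw [Set.mem_compl_iff, Metric.mem_closedBall, dist_zero_right, not_le] at hyb
  have := (div_lt_div_iff_of_pos_right (sub_pos.mpr (spatialNorm_lt_last hx))).mp
    (hyb.trans_le (norm_le_neg_lip_div hx (hCL hyC)))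
  linarith

lemma eq_of_lip_self_le_lip (hx : x ∈ LorentzConeInt) (hy : y ∈ LorentzConeInt)
    (hxy : lip x x ≤ lip x y) (hyx : lip y y ≤ lip x y) : x = y := by
  wlog hd : 0 ≤ (y - x) (Fin.last n) generalizing x y
  · refine (this hy hx (by rwa [lip_comm y x]) (by rwa [lip_comm y x]) ?_).symm
    simp only [Pi.sub_apply] at hd ⊢
    linarith
  by_contra hne
  have hdL : y - x ∈ LorentzCone :=
    ⟨by simp only [lip_sub_left, lip_sub_right, lip_comm y x]; linarith, hd⟩
  have := lip_neg_of_mem_lorentzConeInt hx hdL (sub_ne_zero.mpr (Ne.symm hne))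
  rw [lip_sub_right] at this
  linarith

lemma ne_zero_of_mem_hyp {κ : ℝ} (hx : x ∈ Hyp κ) : x ≠ 0 := by
  rintro rfl
  simp [Hyp] at hx

lemma inv_sqrt_smul_mem_hyp {κ : ℝ} (hκ : 0 < κ) (hx : x ∈ LorentzConeInt) :
    (√(-κ * lip x x))⁻¹ • x ∈ Hyp κ := by
  have hr : 0 < -κ * lip x x := by nlinarith [hx.1]
  refine ⟨?_, ?_⟩
  · rw [lip_smul_left, lip_smul_right, ← mul_assoc, ← mul_inv, Real.mul_self_sqrt hr.le]
    field_simp [hx.1.ne]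
  · simpa using mul_pos (inv_pos.mpr (Real.sqrt_pos.mpr hr)) hx.2

end LorentzGeometry

section LorentzProjection

variable {n : ℕ}

def IsLorentzProj (p : Fin (n+1) → ℝ) (K : Set (Fin (n+1) → ℝ)) (u : Fin (n+1) → ℝ) : Prop :=
  u ∈ K ∧ ∀ z ∈ K, lip (p - u) (z - u) ≤ 0

variable {κ : ℝ} {p q : Fin (n+1) → ℝ} {K : Set (Fin (n+1) → ℝ)}

lemma lip_le_mul_sqrt_of_isMaxOn (hκ : 0 < κ) (hcone : ∀ t : ℝ, 0 < t → ∀ z ∈ K, t • z ∈ K)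
    (hq : IsMaxOn (lip p) (K ∩ Hyp κ) q) {y : Fin (n+1) → ℝ} (hyK : y ∈ K)
    (hy : y ∈ LorentzConeInt) : lip p y ≤ lip p q * √(-κ * lip y y) := by
  have hr : 0 < √(-κ * lip y y) := Real.sqrt_pos.mpr (by nlinarith [hy.1])
  have h : lip p ((√(-κ * lip y y))⁻¹ • y) ≤ lip p q :=
    hq ⟨hcone _ (inv_pos.mpr hr) y hyK, inv_sqrt_smul_mem_hyp hκ hy⟩
  rwa [lip_smul_right, inv_mul_le_iff₀ hr, mul_comm] at h

lemma lip_le_of_isMaxOn (hκ : 0 < κ) (hp : p ∈ LorentzConeInt) (hK : K ⊆ LorentzCone)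
    (hconv : Convex ℝ K) (hcone : ∀ t : ℝ, 0 < t → ∀ z ∈ K, t • z ∈ K)
    (hqC : q ∈ K ∩ Hyp κ) (hq : IsMaxOn (lip p) (K ∩ Hyp κ) q) {z : Fin (n+1) → ℝ}
    (hz : z ∈ K) : lip p z ≤ -κ * lip p q * lip q z := by
  obtain ⟨hqK, hqq, hql⟩ := hqC
  set A := lip p q
  set B := lip p z
  set γ := -κ * lip q z
  set δ := -κ * lip z z
  have hA : A < 0 := lip_neg_of_mem_lorentzConeInt hp (hK hqK) (ne_zero_of_mem_hyp ⟨hqq, hql⟩)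
  have hγ : 0 ≤ γ := by nlinarith [lip_nonpos_of_mem_lorentzCone (hK hqK) (hK hz)]
  have hδ : 0 ≤ δ := by nlinarith [(hK hz).1]
  have hvar : ∀ s > 0, 2 * A * (A * γ - B) ≤ s * (B ^ 2 - A ^ 2 * δ) := by
    intro s hs
    have hyK : q + s • z ∈ K := add_mem_of_convex_of_smul_mem hconv hcone hqK (hcone s hs z hz)
    have hQ : 0 < 1 + 2 * s * γ + s ^ 2 * δ := by positivity
    have hyy : -κ * lip (q + s • z) (q + s • z) = 1 + 2 * s * γ + s ^ 2 * δ := by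
      simp only [γ, δ, lip_add_left, lip_add_right, lip_smul_left, lip_smul_right, lip_comm z q,
        hqq]
      field_simp
      ring
    have hyI : q + s • z ∈ LorentzConeInt :=
      mem_lorentzConeInt (hK hyK) (neg_of_mul_neg_right (by linarith) hκ.le)
    have h := lip_le_mul_sqrt_of_isMaxOn hκ hcone hq hyK hyI
    rw [hyy, lip_add_right, lip_smul_right] at h
    set R := √(1 + 2 * s * γ + s ^ 2 * δ)
    have hR : R ^ 2 = 1 + 2 * s * γ + s ^ 2 * δ := Real.sq_sqrt hQ.le
    have hAR : A * R ≤ 0 := mul_nonpos_of_nonpos_of_nonneg hA.le (Real.sqrt_nonneg _)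
    -- both sides of `h` are nonpositive, so squaring reverses it
    have hsq : A ^ 2 * R ^ 2 ≤ (A + s * B) ^ 2 := by
      nlinarith [mul_nonneg_of_nonpos_of_nonpos (sub_nonpos.mpr h)
        (by linarith : A + s * B + A * R ≤ 0)]
    rw [hR] at hsq
    have : s * (2 * A * (A * γ - B)) ≤ s * (s * (B ^ 2 - A ^ 2 * δ)) := by linarith
    exact le_of_mul_le_mul_left this hs
  nlinarith [nonpos_of_forall_pos_le_mul hvar]

lemma isLorentzProj_of_isMaxOn (hκ : 0 < κ) (hp : p ∈ LorentzConeInt) (hK : K ⊆ LorentzCone)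
    (hconv : Convex ℝ K) (hcone : ∀ t : ℝ, 0 < t → ∀ z ∈ K, t • z ∈ K)
    (hqC : q ∈ K ∩ Hyp κ) (hq : IsMaxOn (lip p) (K ∩ Hyp κ) q) :
    IsLorentzProj p K ((-κ * lip p q) • q) := by
  have hA : lip p q < 0 :=
    lip_neg_of_mem_lorentzConeInt hp (hK hqC.1) (ne_zero_of_mem_hyp hqC.2)
  refine ⟨hcone _ (by nlinarith) q hqC.1, fun z hz => ?_⟩
  have key := lip_le_of_isMaxOn hκ hp hK hconv hcone hqC hq hz
  simp only [lip_sub_left, lip_sub_right, lip_smul_left, lip_smul_right, hqC.2.1]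
  field_simp
  nlinarith

lemma IsLorentzProj.lip_sub_self_eq_zero (hcone : ∀ t : ℝ, 0 < t → ∀ z ∈ K, t • z ∈ K)
    {u : Fin (n+1) → ℝ} (h : IsLorentzProj p K u) : lip (p - u) u = 0 := by
  have h₂ := h.2 _ (hcone 2 two_pos u h.1)
  have h₃ := h.2 _ (hcone (1 / 2) (by norm_num) u h.1)
  rw [show (2 : ℝ) • u - u = u by module] at h₂
  rw [show (1 / 2 : ℝ) • u - u = (-1 / 2 : ℝ) • u by module, lip_smul_right] at h₃
  linarith

lemma IsLorentzProj.eq (hp : p ∈ LorentzConeInt) (hK : K ⊆ LorentzCone)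
    (hcone : ∀ t : ℝ, 0 < t → ∀ z ∈ K, t • z ∈ K) {v w : Fin (n+1) → ℝ}
    (hv : IsLorentzProj p K v) (hw : IsLorentzProj p K w) (hv0 : v ≠ 0) (hw0 : w ≠ 0) :
    v = w := by
  have hvv := hv.lip_sub_self_eq_zero hcone
  have hww := hw.lip_sub_self_eq_zero hcone
  rw [lip_sub_left] at hvv hww
  have hvI := mem_lorentzConeInt (hK hv.1)
    (by linarith [lip_neg_of_mem_lorentzConeInt hp (hK hv.1) hv0])
  have hwI := mem_lorentzConeInt (hK hw.1)
    (by linarith [lip_neg_of_mem_lorentzConeInt hp (hK hw.1) hw0])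
  have hvw := hv.2 w hw.1
  have hwv := hw.2 v hv.1
  simp only [lip_sub_left, lip_sub_right] at hvw hwv
  exact eq_of_lip_self_le_lip hvI hwI (by linarith [lip_comm v w]) (by linarith)

end LorentzProjection

theorem lorentz_projection_exists_unique_general {n : ℕ}
    (p : Fin (n+1) → ℝ) (hp : p ∈ LorentzConeInt)
    (K : Set (Fin (n+1) → ℝ)) (hK : K ⊆ LorentzCone)
    (hconv : Convex ℝ K) (hcone : ∀ t : ℝ, 0 < t → ∀ z ∈ K, t • z ∈ K)
    (hCc : IsClosed (K ∩ Hyp (-1 / lip p p)))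
    (hCne : (K ∩ Hyp (-1 / lip p p)).Nonempty) :
    (∀ z ∈ K, lip (p - 0) (z - 0) ≤ 0) ∧
    (∃! u : Fin (n+1) → ℝ, u ≠ 0 ∧ u ∈ K ∧ ∀ z ∈ K, lip (p - u) (z - u) ≤ 0) := by
  have hκ : 0 < -1 / lip p p := div_pos_of_neg_of_neg (by norm_num) hp.1
  obtain ⟨q, hqC, hq⟩ := exists_isMaxOn_lip hp hCc (fun w hw => hK hw.1) hCne
  have hA : lip p q < 0 :=
    lip_neg_of_mem_lorentzConeInt hp (hK hqC.1) (ne_zero_of_mem_hyp hqC.2)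
  have hu := isLorentzProj_of_isMaxOn hκ hp hK hconv hcone hqC hq
  have hu0 : (-(-1 / lip p p) * lip p q) • q ≠ 0 :=
    smul_ne_zero (by nlinarith) (ne_zero_of_mem_hyp hqC.2)
  refine ⟨fun z hz => ?_, _, ⟨hu0, hu⟩,
    fun v ⟨hv0, hv⟩ => IsLorentzProj.eq hp hK hcone hv hu hv0 hu0⟩
  simpa using lip_nonpos_of_mem_lorentzCone (lorentzConeInt_subset_lorentzCone hp) (hK hz)

/-- For p ∈ int(L) and a convex cone K ⊆ L with 0 ∈ K such that C = K ∩ ℍⁿ_κ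
(κ = −1/⟨p,p⟩) is a nonempty closed κ-hyperbolically convex set: 0 is a Lorentz
projection of p into K, and there is exactly one nonzero Lorentz projection. -/
theorem lorentz_projection_exists_unique {n : ℕ}
    (p : Fin (n+1) → ℝ) (hp : p ∈ LorentzConeInt)
    (K : Set (Fin (n+1) → ℝ)) (hK : K ⊆ LorentzCone)
    (hconv : Convex ℝ K) (hcone : ∀ t : ℝ, 0 < t → ∀ z ∈ K, t • z ∈ K)
    (h0 : (0 : Fin (n+1) → ℝ) ∈ K)
    (hCc : IsClosed (K ∩ Hyp (-1 / lip p p)))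
    (hCne : (K ∩ Hyp (-1 / lip p p)).Nonempty) :
    (∀ z ∈ K, lip (p - 0) (z - 0) ≤ 0) ∧
    (∃! u : Fin (n+1) → ℝ, u ≠ 0 ∧ u ∈ K ∧ ∀ z ∈ K, lip (p - u) (z - u) ≤ 0) :=
  lorentz_projection_exists_unique_general p hp K hK hconv hcone hCc hCne
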